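/- Fix a ≥ 0 and λ ≥ 1. Let 𝔤 have orthonormal basis {x₁,x₂,x₃} with brackets [x₁,x₂] = a x₂ - λ x₃, [x₁,x₃] = (1/λ) x₂ + a x₃. If the Ricci operator of this metric lies in the set of matrices of the form [[x₁₁,0,0],[x₂₁,x₂₂,x₂₃],[x₃₁,-λ² x₂₃,x₂₂]], then λ = 1. -/

import Mathlib

/-! The Ricci operator has diagonal entries `-(4a² + λ² - λ⁻²)/2` at `x₂` and
`-(4a² - λ² + λ⁻²)/2` at `x₃`, while every matrix of the given shape has equal `(2,2)` and
`(3,3)` entries. Hence `λ² = λ⁻²`, i.e. `λ⁴ = 1`, and `λ = 1` since `λ > 0`. -/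

open Matrix

noncomputable section

/-- standard basis of ℝ³ -/
def e (i : Fin 3) : Fin 3 → ℝ := Pi.single i 1

/-- standard inner product on ℝ³ (the basis `e` is orthonormal) -/
def dotp (x y : Fin 3 → ℝ) : ℝ := ∑ i, x i * y i

/-- Levi-Civita connection of the metric Lie algebra (ℝ³, br, dotp), via
    2⟨∇_X Y, Z⟩ = ⟨[Z,X],Y⟩ + ⟨X,[Z,Y]⟩ + ⟨[X,Y],Z⟩. -/
def nabla (br : (Fin 3 → ℝ) → (Fin 3 → ℝ) → (Fin 3 → ℝ)) (X Y : Fin 3 → ℝ) :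
    Fin 3 → ℝ :=
  fun k => (1/2) * (dotp (br (e k) X) Y + dotp X (br (e k) Y) + dotp (br X Y) (e k))

/-- Riemannian curvature R(X,Y)Z = ∇_X∇_Y Z - ∇_Y∇_X Z - ∇_{[X,Y]}Z. -/
def curv (br : (Fin 3 → ℝ) → (Fin 3 → ℝ) → (Fin 3 → ℝ)) (X Y Z : Fin 3 → ℝ) :
    Fin 3 → ℝ :=
  nabla br X (nabla br Y Z) - nabla br Y (nabla br X Z) - nabla br (br X Y) Z

/-- Ricci operator Ric(X) = Σᵢ R(X,eᵢ)eᵢ. -/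
def ric (br : (Fin 3 → ℝ) → (Fin 3 → ℝ) → (Fin 3 → ℝ)) (X : Fin 3 → ℝ) :
    Fin 3 → ℝ :=
  ∑ i, curv br X (e i) (e i)

/-- The bracket with [x₁,x₂] = a x₂ - λ x₃, [x₁,x₃] = (1/λ) x₂ + a x₃, [x₂,x₃] = 0. -/
def br10 (a l : ℝ) (x y : Fin 3 → ℝ) : Fin 3 → ℝ :=
  ![0,
    a * (x 0 * y 1 - x 1 * y 0) + (1/l) * (x 0 * y 2 - x 2 * y 0),
    -l * (x 0 * y 1 - x 1 * y 0) + a * (x 0 * y 2 - x 2 * y 0)]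

theorem mulVec_e_apply (M : Matrix (Fin 3) (Fin 3) ℝ) (i j : Fin 3) : (M *ᵥ e j) i = M i j := by
  simp [e]

theorem ric_br10_e_one_one (a l : ℝ) :
    ric (br10 a l) (e 1) 1 = -(4 * a ^ 2 + l ^ 2 - l⁻¹ ^ 2) / 2 := by
  simp [ric, curv, nabla, dotp, br10, e, Fin.sum_univ_succ, Pi.single_apply]
  ring

theorem ric_br10_e_two_two (a l : ℝ) :
    ric (br10 a l) (e 2) 2 = -(4 * a ^ 2 - l ^ 2 + l⁻¹ ^ 2) / 2 := by
  simp [ric, curv, nabla, dotp, br10, e, Fin.sum_univ_succ, Pi.single_apply]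
  ring

theorem eq_one_of_sq_eq_inv_sq {l : ℝ} (hl : 0 < l) (h : l ^ 2 = l⁻¹ ^ 2) : l = 1 := by
  have h4 : l ^ 4 = 1 := by
    field_simp at h
    linear_combination h
  exact (pow_eq_one_iff_of_nonneg hl.le (by norm_num)).1 h4

theorem r3a'_soliton_forces_general (a l : ℝ) (hl : 1 ≤ l) :
    (∃ x11 x21 x22 x23 x31 : ℝ,
      ∀ i : Fin 3, ric (br10 a l) (e i) =
        Matrix.mulVec !![x11,0,0; x21,x22,x23; x31, -l^2 * x23, x22] (e i)) →
    l = 1 := by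
  rintro ⟨x11, x21, x22, x23, x31, hric⟩
  have h22 := congrFun (hric 1) 1
  have h33 := congrFun (hric 2) 2
  rw [ric_br10_e_one_one, mulVec_e_apply] at h22
  rw [ric_br10_e_two_two, mulVec_e_apply] at h33
  simp only [of_apply, cons_val', cons_val_one, cons_val_two, cons_val_zero, cons_val_fin_one,
    vecHead, tail_cons] at h22 h33
  exact eq_one_of_sq_eq_inv_sq (by linarith) (by linarith)

/-- If the Ricci operator lies in the matrix expression of ℝ·id ⊕ Der(𝔤)
    in the basis {x₁,x₂,x₃}, then λ = 1. -/
theorem r3a'_soliton_forces (a l : ℝ) (ha : 0 ≤ a) (hl : 1 ≤ l) :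
    (∃ x11 x21 x22 x23 x31 : ℝ,
      ∀ i : Fin 3, ric (br10 a l) (e i) =
        Matrix.mulVec !![x11,0,0; x21,x22,x23; x31, -l^2 * x23, x22] (e i)) →
    l = 1 :=
  r3a'_soliton_forces_general a l hl
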